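/- Let σ ∈ ℝ, σ ≠ 0, and let ω₀, ω₁ : ℝ² → ℝ be twice continuously differentiable functions related by the Bäcklund transformation for the hyperbolic sine-Gordon equation with parameter σ, i.e. ∂ω₁/∂v − ∂ω₀/∂u = (σ·sin(ω₁+ω₀) + σ⁻¹·sin(ω₁−ω₀))/2 and ∂ω₁/∂u − ∂ω₀/∂v = (σ·sin(ω₁+ω₀) − σ⁻¹·sin(ω₁−ω₀))/2 everywhere. Then both ω₀ and ω₁ satisfy the hyperbolic sine-Gordon equation: ∂²ωⱼ/∂v² − ∂²ωⱼ/∂u² = cos ωⱼ · sin ωⱼ for j = 0, 1, at every point of ℝ². -/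

import Mathlib

/-- Partial derivative with respect to the first variable `u`. -/
noncomputable def pdu (f : ℝ × ℝ → ℝ) (p : ℝ × ℝ) : ℝ :=
  deriv (fun u => f (u, p.2)) p.1

/-- Partial derivative with respect to the second variable `v`. -/
noncomputable def pdv (f : ℝ × ℝ → ℝ) (p : ℝ × ℝ) : ℝ :=
  deriv (fun v => f (p.1, v)) p.2

/-- The pair `(ω₀, ω₁)` is related by the Bäcklund transformation for the
hyperbolic sine-Gordon equation with parameter `σ`. -/
def BacklundSG (σ : ℝ) (ω₀ ω₁ : ℝ × ℝ → ℝ) : Prop :=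
  ∀ p : ℝ × ℝ,
    pdv ω₁ p - pdu ω₀ p =
      (σ * Real.sin (ω₁ p + ω₀ p) + σ⁻¹ * Real.sin (ω₁ p - ω₀ p)) / 2 ∧
    pdu ω₁ p - pdv ω₀ p =
      (σ * Real.sin (ω₁ p + ω₀ p) - σ⁻¹ * Real.sin (ω₁ p - ω₀ p)) / 2

/-! In the light-cone directions `∂₊ = ∂u + ∂v` and `∂₋ = ∂v − ∂u` the Bäcklund transformation
decouples into `∂₊(ω₁ − ω₀) = σ sin(ω₁ + ω₀)` and `∂₋(ω₁ + ω₀) = σ⁻¹ sin(ω₁ − ω₀)`, while, by symmetry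
of second derivatives, the d'Alembertian `□ = ∂v² − ∂u²` equals both `∂₋∂₊` and `∂₊∂₋`.
Differentiating each light-cone equation along the other direction and substituting the other
equation gives `□(ω₁ + ω₀) = sin(ω₁ + ω₀) cos(ω₁ − ω₀)` and `□(ω₁ − ω₀) = cos(ω₁ + ω₀) sin(ω₁ − ω₀)`;
half their sum and half their difference are `sin(2ω₁)/2` and `sin(2ω₀)/2`. -/

open Real

section PartialDerivatives

variable {f : ℝ × ℝ → ℝ} {p : ℝ × ℝ}

lemma pdu_eq_fderiv (hf : DifferentiableAt ℝ f p) : pdu f p = fderiv ℝ f p (1, 0) := by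
  have hslice : HasDerivAt (fun u : ℝ => (u, p.2)) ((1 : ℝ), (0 : ℝ)) p.1 :=
    (hasDerivAt_id p.1).prodMk (hasDerivAt_const p.1 p.2)
  exact (hf.hasFDerivAt.comp_hasDerivAt p.1 hslice).deriv

lemma pdv_eq_fderiv (hf : DifferentiableAt ℝ f p) : pdv f p = fderiv ℝ f p (0, 1) := by
  have hslice : HasDerivAt (fun v : ℝ => (p.1, v)) ((0 : ℝ), (1 : ℝ)) p.2 :=
    (hasDerivAt_const p.2 p.1).prodMk (hasDerivAt_id p.2)
  exact (hf.hasFDerivAt.comp_hasDerivAt p.2 hslice).deriv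

lemma fderiv_fderiv_apply (hf : DifferentiableAt ℝ (fderiv ℝ f) p) (a b : ℝ × ℝ) :
    fderiv ℝ (fun q => fderiv ℝ f q b) p a = fderiv ℝ (fderiv ℝ f) p a b := by
  rw [fderiv_clm_apply hf (differentiableAt_const b)]
  simp

lemma differentiable_fderiv_of_contDiff_two (hf : ContDiff ℝ 2 f) :
    Differentiable ℝ (fderiv ℝ f) :=
  (hf.fderiv_right (m := 1) one_add_one_eq_two.le).differentiable one_ne_zero

lemma pdu_pdu_eq_fderiv_fderiv (hf : ContDiff ℝ 2 f) (p : ℝ × ℝ) :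
    pdu (pdu f) p = fderiv ℝ (fderiv ℝ f) p (1, 0) (1, 0) := by
  have hf' := differentiable_fderiv_of_contDiff_two hf
  have h : pdu f = fun q => fderiv ℝ f q (1, 0) :=
    funext fun q => pdu_eq_fderiv (hf.differentiable two_ne_zero q)
  rw [h, pdu_eq_fderiv ((hf' p).clm_apply (differentiableAt_const _)), fderiv_fderiv_apply (hf' p)]

lemma pdv_pdv_eq_fderiv_fderiv (hf : ContDiff ℝ 2 f) (p : ℝ × ℝ) :
    pdv (pdv f) p = fderiv ℝ (fderiv ℝ f) p (0, 1) (0, 1) := by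
  have hf' := differentiable_fderiv_of_contDiff_two hf
  have h : pdv f = fun q => fderiv ℝ f q (0, 1) :=
    funext fun q => pdv_eq_fderiv (hf.differentiable two_ne_zero q)
  rw [h, pdv_eq_fderiv ((hf' p).clm_apply (differentiableAt_const _)), fderiv_fderiv_apply (hf' p)]

end PartialDerivatives

lemma fderiv_fderiv_apply_eq_of_forall_fderiv_apply_eq_mul_sin {f h : ℝ × ℝ → ℝ} {p b : ℝ × ℝ}
    {c : ℝ} (hf : DifferentiableAt ℝ (fderiv ℝ f) p) (hh : DifferentiableAt ℝ h p)
    (hfh : ∀ q, fderiv ℝ f q b = c * sin (h q)) (a : ℝ × ℝ) :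
    fderiv ℝ (fderiv ℝ f) p a b = c * cos (h p) * fderiv ℝ h p a := by
  rw [← fderiv_fderiv_apply hf, funext hfh, (hh.hasFDerivAt.sin.const_mul c).fderiv]
  simp only [smul_apply, smul_eq_mul]
  ring

noncomputable def dAlembertian (f : ℝ × ℝ → ℝ) (p : ℝ × ℝ) : ℝ :=
  pdv (pdv f) p - pdu (pdu f) p

section DAlembertian

variable {f g : ℝ × ℝ → ℝ}

lemma dAlembertian_eq_fderiv_fderiv (hf : ContDiff ℝ 2 f) (p : ℝ × ℝ) :
    dAlembertian f p = fderiv ℝ (fderiv ℝ f) p (-1, 1) (1, 1) := by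
  have hsymm := hf.contDiffAt.isSymmSndFDerivAt (x := p) (by simp)
  have e₁ : ((-1 : ℝ), (1 : ℝ)) = (0, 1) - (1, 0) := by simp
  have e₂ : ((1 : ℝ), (1 : ℝ)) = (1, 0) + (0, 1) := by simp
  rw [dAlembertian, pdu_pdu_eq_fderiv_fderiv hf, pdv_pdv_eq_fderiv_fderiv hf, e₁, e₂, map_sub,
    sub_apply, map_add, map_add, hsymm.eq (1, 0) (0, 1)]
  ring

lemma dAlembertian_eq_iteratedFDeriv (hf : ContDiff ℝ 2 f) (p : ℝ × ℝ) :
    dAlembertian f p = iteratedFDeriv ℝ 2 f p ![(-1, 1), (1, 1)] := by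
  rw [iteratedFDeriv_two_apply, dAlembertian_eq_fderiv_fderiv hf]
  rfl

lemma dAlembertian_add (hf : ContDiff ℝ 2 f) (hg : ContDiff ℝ 2 g) (p : ℝ × ℝ) :
    dAlembertian (f + g) p = dAlembertian f p + dAlembertian g p := by
  rw [dAlembertian_eq_iteratedFDeriv (f := f + g) (hf.add hg), dAlembertian_eq_iteratedFDeriv hf,
    dAlembertian_eq_iteratedFDeriv hg, iteratedFDeriv_add_apply hf.contDiffAt hg.contDiffAt]
  rfl

lemma dAlembertian_sub (hf : ContDiff ℝ 2 f) (hg : ContDiff ℝ 2 g) (p : ℝ × ℝ) :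
    dAlembertian (f - g) p = dAlembertian f p - dAlembertian g p := by
  rw [dAlembertian_eq_iteratedFDeriv (f := f - g) (hf.sub hg), dAlembertian_eq_iteratedFDeriv hf,
    dAlembertian_eq_iteratedFDeriv hg, iteratedFDeriv_sub_apply hf.contDiffAt hg.contDiffAt]
  rfl

end DAlembertian

namespace BacklundSG

variable {σ : ℝ} {ω₀ ω₁ : ℝ × ℝ → ℝ} {q : ℝ × ℝ}

lemma fderiv_sub_apply_one_one (hB : BacklundSG σ ω₀ ω₁) (h₀ : DifferentiableAt ℝ ω₀ q)
    (h₁ : DifferentiableAt ℝ ω₁ q) :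
    fderiv ℝ (ω₁ - ω₀) q (1, 1) = σ * sin ((ω₁ + ω₀) q) := by
  have e : ((1 : ℝ), (1 : ℝ)) = (1, 0) + (0, 1) := by simp
  rw [fderiv_sub h₁ h₀, sub_apply, e, map_add, map_add, ← pdu_eq_fderiv h₀,
    ← pdu_eq_fderiv h₁, ← pdv_eq_fderiv h₀, ← pdv_eq_fderiv h₁, Pi.add_apply]
  linarith [hB q]

lemma fderiv_add_apply_neg_one_one (hB : BacklundSG σ ω₀ ω₁) (h₀ : DifferentiableAt ℝ ω₀ q)
    (h₁ : DifferentiableAt ℝ ω₁ q) :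
    fderiv ℝ (ω₁ + ω₀) q (-1, 1) = σ⁻¹ * sin ((ω₁ - ω₀) q) := by
  have e : ((-1 : ℝ), (1 : ℝ)) = (0, 1) - (1, 0) := by simp
  rw [fderiv_add h₁ h₀, add_apply, e, map_sub, map_sub, ← pdu_eq_fderiv h₀,
    ← pdu_eq_fderiv h₁, ← pdv_eq_fderiv h₀, ← pdv_eq_fderiv h₁, Pi.sub_apply]
  linarith [hB q]

end BacklundSG

lemma cos_mul_sin_of_add_eq_of_sub_eq {x y a b : ℝ}
    (hadd : a + b = sin (y + x) * cos (y - x)) (hsub : a - b = cos (y + x) * sin (y - x)) :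
    b = cos x * sin x ∧ a = cos y * sin y := by
  have hx : sin (y + x) * cos (y - x) - cos (y + x) * sin (y - x) = 2 * sin x * cos x := by
    rw [← sin_sub, ← sin_two_mul]; ring_nf
  have hy : sin (y + x) * cos (y - x) + cos (y + x) * sin (y - x) = 2 * sin y * cos y := by
    rw [← sin_add, ← sin_two_mul]; ring_nf
  constructor <;> linarith

/-- If twice continuously differentiable `ω₀, ω₁ : ℝ² → ℝ` are related by the Bäcklund
transformation for the hyperbolic sine-Gordon equation with parameter `σ ≠ 0`, then both
satisfy the hyperbolic sine-Gordon equation `∂²ω/∂v² − ∂²ω/∂u² = cos ω · sin ω`. -/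
theorem backlund_implies_hyperbolic_sineGordon
    (σ : ℝ) (hσ : σ ≠ 0) (ω₀ ω₁ : ℝ × ℝ → ℝ)
    (hω₀ : ContDiff ℝ 2 ω₀) (hω₁ : ContDiff ℝ 2 ω₁)
    (hB : BacklundSG σ ω₀ ω₁) :
    (∀ p : ℝ × ℝ,
        pdv (pdv ω₀) p - pdu (pdu ω₀) p = Real.cos (ω₀ p) * Real.sin (ω₀ p)) ∧
    (∀ p : ℝ × ℝ,
        pdv (pdv ω₁) p - pdu (pdu ω₁) p = Real.cos (ω₁ p) * Real.sin (ω₁ p)) := by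
  have hs : ContDiff ℝ 2 (ω₁ + ω₀) := hω₁.add hω₀
  have hd : ContDiff ℝ 2 (ω₁ - ω₀) := hω₁.sub hω₀
  have h₀ : Differentiable ℝ ω₀ := hω₀.differentiable two_ne_zero
  have h₁ : Differentiable ℝ ω₁ := hω₁.differentiable two_ne_zero
  have hsum p : dAlembertian (ω₁ + ω₀) p = sin (ω₁ p + ω₀ p) * cos (ω₁ p - ω₀ p) := by
    rw [dAlembertian_eq_fderiv_fderiv hs, (hs.contDiffAt.isSymmSndFDerivAt (by simp)).eq,
      fderiv_fderiv_apply_eq_of_forall_fderiv_apply_eq_mul_sin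
        (differentiable_fderiv_of_contDiff_two hs p) (hd.differentiable two_ne_zero p)
        (fun q => hB.fderiv_add_apply_neg_one_one (h₀ q) (h₁ q)),
      hB.fderiv_sub_apply_one_one (h₀ p) (h₁ p), Pi.add_apply, Pi.sub_apply]
    field_simp
  have hdiff p : dAlembertian (ω₁ - ω₀) p = cos (ω₁ p + ω₀ p) * sin (ω₁ p - ω₀ p) := by
    rw [dAlembertian_eq_fderiv_fderiv hd,
      fderiv_fderiv_apply_eq_of_forall_fderiv_apply_eq_mul_sin
        (differentiable_fderiv_of_contDiff_two hd p) (hs.differentiable two_ne_zero p)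
        (fun q => hB.fderiv_sub_apply_one_one (h₀ q) (h₁ q)),
      hB.fderiv_add_apply_neg_one_one (h₀ p) (h₁ p), Pi.add_apply, Pi.sub_apply]
    field_simp
  have hsg p := cos_mul_sin_of_add_eq_of_sub_eq
    ((dAlembertian_add hω₁ hω₀ p).symm.trans (hsum p))
    ((dAlembertian_sub hω₁ hω₀ p).symm.trans (hdiff p))
  exact ⟨fun p => (hsg p).1, fun p => (hsg p).2⟩
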